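/- arXiv:2505.06969 — 6 statements merged into one kernel-verified Lean document; each statement's English description precedes it below -/
import Mathlib

section
/- Let Δ⁺ be a set of positive roots for a root system with a fixed subsystem of 'compact' roots closed under the parity rule (sum of two roots whose sum is a root is compact iff both summands have equal compactness type). Suppose γ is a positive root that cannot be written as a sum of two compact positive roots, and α_l, α_{l+1}, ..., α_m are simple roots such that for every k with l ≤ k ≤ m, both α_l + ⋯ + α_k and γ − (α_l + ⋯ + α_k) are positive roots. Then α_l is non-compact and α_{l+1},...,α_m are all compact. -/
open Finset

/-- if compactness of roots obeys the parity rule, `γ` is a compact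
positive root not expressible as a sum of two compact positive roots, and
`α_l, …, α_m` are simple roots all of whose initial partial sums `α_l + ⋯ + α_k`
and complements `γ - (α_l + ⋯ + α_k)` are positive roots, then `α_l` is
non-compact and `α_{l+1}, …, α_m` are all compact. -/
theorem stmt6 {V : Type*} [AddCommGroup V]
    (Δpos : Set V) (compact : V → Prop)
    (hparity : ∀ a b : V, a ∈ Δpos → b ∈ Δpos → a + b ∈ Δpos →
      (compact (a + b) ↔ (compact a ↔ compact b)))
    (γ : V) (hγ : γ ∈ Δpos) (hγc : compact γ)
    (hmin : ¬ ∃ a b, a ∈ Δpos ∧ b ∈ Δpos ∧ compact a ∧ compact b ∧ γ = a + b)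
    (l m : ℕ) (hlm : l ≤ m) (α : ℕ → V)
    (hαpos : ∀ k, l ≤ k → k ≤ m → α k ∈ Δpos)
    (hsums : ∀ k, l ≤ k → k ≤ m → (∑ i ∈ Icc l k, α i) ∈ Δpos)
    (hdiffs : ∀ k, l ≤ k → k ≤ m → (γ - ∑ i ∈ Icc l k, α i) ∈ Δpos) :
    ¬ compact (α l) ∧ ∀ k, l < k → k ≤ m → compact (α k) := by
  have Snc : ∀ k, l ≤ k → k ≤ m → ¬ compact (∑ i ∈ Icc l k, α i) := by
    intro k hl hk hc
    have hS := hsums k hl hk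
    have hD := hdiffs k hl hk
    have hsum : (∑ i ∈ Icc l k, α i) + (γ - ∑ i ∈ Icc l k, α i) = γ := by abel
    have hp := hparity _ _ hS hD (by rw [hsum]; exact hγ)
    rw [hsum] at hp
    have hDc : compact (γ - ∑ i ∈ Icc l k, α i) := (hp.mp hγc).mp hc
    exact hmin ⟨_, _, hS, hD, hc, hDc, by abel⟩
  constructor
  · have := Snc l le_rfl hlm
    simpa using this
  · intro k hlk hkm
    have hk1 : l ≤ k - 1 := by omega
    have hk1m : k - 1 ≤ m := by omega
    have hstep : (∑ i ∈ Icc l k, α i) = (∑ i ∈ Icc l (k-1), α i) + α k := by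
      have hins : Icc l k = insert k (Icc l (k-1)) := by
        ext x; simp only [Finset.mem_Icc, Finset.mem_insert]; omega
      rw [hins, Finset.sum_insert (by simp only [Finset.mem_Icc]; omega)]
      abel
    have hp := hparity _ _ (hsums (k-1) hk1 hk1m) (hαpos k (by omega) hkm)
      (by rw [← hstep]; exact hsums k (by omega) hkm)
    rw [← hstep] at hp
    have h1 := Snc k (by omega) hkm
    have h2 := Snc (k-1) hk1 hk1m
    tauto
end

section
/- Let Δ be a root system of type A_{n} with simple roots α_1,...,α_n and a compactness 2-coloring of roots satisfying the parity rule. If γ is a compact positive root that is not simple and cannot be written as a sum of two compact positive roots, then γ = α_l + α_{l+1} + ⋯ + α_m with l < m, where α_l and α_m are non-compact and α_{l+1},...,α_{m−1} are compact. -/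
open Finset

/-- Standard basis vector `e i` of `ℕ → ℝ`. -/
noncomputable def e (i : ℕ) : ℕ → ℝ := Pi.single i 1

/-- Simple roots of type `A_n`: `α_i = e_i - e_{i+1}`. -/
noncomputable def αA (i : ℕ) : ℕ → ℝ := e i - e (i+1)

/-- Positive roots of type `A_n`: the consecutive sums `α_l + ⋯ + α_m`, `1 ≤ l ≤ m ≤ n`. -/
def AposRoots (n : ℕ) : Set (ℕ → ℝ) :=
  {v | ∃ l m, 1 ≤ l ∧ l ≤ m ∧ m ≤ n ∧ v = ∑ k ∈ Icc l m, αA k}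

/-- in type `A_n` with non-compact simple roots indexed by `S` and
compactness given by the parity rule, a compact positive root `γ` that is not
simple and is not a sum of two compact positive roots has the form
`α_l + ⋯ + α_m` with `α_l, α_m` non-compact and all intermediate `α_k` compact. -/
theorem stmt7 (n : ℕ) (S : Finset ℕ) (hS : S ⊆ Icc 1 n)
    (compact : (ℕ → ℝ) → Prop)
    (hcomp : ∀ l m, 1 ≤ l → l ≤ m → m ≤ n →
      (compact (∑ k ∈ Icc l m, αA k) ↔ Even ((S ∩ Icc l m).card)))
    (γ : ℕ → ℝ) (hγ : γ ∈ AposRoots n) (hγc : compact γ)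
    (hns : ¬ ∃ i, 1 ≤ i ∧ i ≤ n ∧ γ = αA i)
    (hmin : ¬ ∃ a b, a ∈ AposRoots n ∧ b ∈ AposRoots n ∧
      compact a ∧ compact b ∧ γ = a + b) :
    ∃ l m, 1 ≤ l ∧ l < m ∧ m ≤ n ∧ γ = ∑ k ∈ Icc l m, αA k ∧
      l ∈ S ∧ m ∈ S ∧ ∀ k, l < k → k < m → k ∉ S := by
  obtain ⟨l, m, hl1, hlm, hmn, hγeq⟩ := hγ
  have hlm' : l < m := by
    rcases lt_or_eq_of_le hlm with h | rfl
    · exact h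
    · exact absurd ⟨l, hl1, hmn, by simpa using hγeq⟩ hns
  have heven : Even ((S ∩ Icc l m).card) := by
    rw [← hcomp l m hl1 hlm hmn, ← hγeq]; exact hγc
  -- union / disjointness facts
  have hU : ∀ j, l ≤ j → j ≤ m → Icc l j ∪ Icc (j+1) m = Icc l m := by
    intro j h1 h2
    ext a; simp only [Finset.mem_union, Finset.mem_Icc]; omega
  have hD : ∀ j : ℕ, Disjoint (Icc l j) (Icc (j+1) m) := by
    intro j
    rw [Finset.disjoint_left]
    intro a ha hb
    simp only [Finset.mem_Icc] at ha hb; omega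
  have hcard : ∀ j, l ≤ j → j ≤ m →
      (S ∩ Icc l m).card = (S ∩ Icc l j).card + (S ∩ Icc (j+1) m).card := by
    intro j h1 h2
    rw [← hU j h1 h2, Finset.inter_union_distrib_left,
      Finset.card_union_of_disjoint
        ((hD j).mono Finset.inter_subset_right Finset.inter_subset_right)]
  have key : ∀ j, l ≤ j → j < m → Odd ((S ∩ Icc l j).card) := by
    intro j hlj hjm
    by_contra hodd
    rw [Nat.not_odd_iff_even] at hodd
    have h2 : Even ((S ∩ Icc (j+1) m).card) := by
      have := hcard j hlj (le_of_lt hjm)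
      rw [Nat.even_iff] at heven hodd ⊢
      omega
    refine hmin ⟨∑ k ∈ Icc l j, αA k, ∑ k ∈ Icc (j+1) m, αA k,
      ⟨l, j, hl1, hlj, by omega, rfl⟩, ⟨j+1, m, by omega, by omega, hmn, rfl⟩,
      (hcomp l j hl1 hlj (by omega)).mpr hodd,
      (hcomp (j+1) m (by omega) (by omega) hmn).mpr h2, ?_⟩
    rw [hγeq, ← hU j hlj (le_of_lt hjm), Finset.sum_union (hD j)]
  have hstep : ∀ k, l ≤ k →
      (S ∩ Icc l (k+1)).card = (S ∩ Icc l k).card + (if k+1 ∈ S then 1 else 0) := by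
    intro k hk
    have hU2 : Icc l (k+1) = Icc l k ∪ {k+1} := by
      ext a; simp only [Finset.mem_union, Finset.mem_Icc, Finset.mem_singleton]; omega
    have hD2 : Disjoint (S ∩ Icc l k) (S ∩ {k+1}) := by
      rw [Finset.disjoint_left]
      intro a ha hb
      simp only [Finset.mem_inter, Finset.mem_Icc, Finset.mem_singleton] at ha hb
      omega
    rw [hU2, Finset.inter_union_distrib_left, Finset.card_union_of_disjoint hD2]
    congr 1
    by_cases h : k+1 ∈ S
    · rw [if_pos h, Finset.inter_comm, Finset.singleton_inter_of_mem h,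
        Finset.card_singleton]
    · rw [if_neg h, Finset.inter_comm, Finset.singleton_inter_of_notMem h,
        Finset.card_empty]
  have hlS : l ∈ S := by
    have h1 := key l le_rfl hlm'
    by_contra h
    rw [Finset.Icc_self, Finset.inter_comm, Finset.singleton_inter_of_notMem h] at h1
    simp at h1
  have hmS : m ∈ S := by
    obtain ⟨m', rfl⟩ : ∃ m', m = m' + 1 := ⟨m - 1, by omega⟩
    have h1 := key m' (by omega) (by omega)
    have h2 := hstep m' (by omega)
    by_cases h : m' + 1 ∈ S
    · exact h
    · rw [if_neg h] at h2
      rw [Nat.even_iff] at heven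
      rw [Nat.odd_iff] at h1
      omega
  refine ⟨l, m, hl1, hlm', hmn, hγeq, hlS, hmS, ?_⟩
  intro k hlk hkm
  obtain ⟨k', rfl⟩ : ∃ k', k = k' + 1 := ⟨k - 1, by omega⟩
  intro hkS
  have h1 := key k' (by omega) (by omega)
  have h2 := key (k'+1) (by omega) (by omega)
  have h3 := hstep k' (by omega)
  rw [if_pos hkS] at h3
  rw [Nat.odd_iff] at h1 h2
  omega
end

section
/- Let μ be a dominant weight for Δ⁺(k,t) with fundamental weights ϖ_1,...,ϖ_n of a root system of type D_n (k = so(2n) part of sl(2n,ℝ)), written μ = Σ m_i ϖ_i with m_i ∈ ℤ_{≥0}. With ξ_i = ϖ_i for i ≤ n−2, ξ_{n−1} = ϖ_{n−1} + ϖ_n, ξ_n = 2ϖ_n, suppose: (a) μ + 2ρ_c is ξ-dominant (equivalently m_{n−1} ≤ m_n); (b) for each 1 ≤ i ≤ n−1, μ − ξ_i is not dominant; and (c) either μ − ξ_n is not dominant or μ + 2ρ_c − ξ_n is not ξ-dominant. Then μ = 0 or μ = ϖ_n. -/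
open Finset

/-- `v` is dominant with respect to the family `f` (indexed by `1,…,n`):
any expansion of `v` in terms of `f 1, …, f n` has non-negative coefficients. -/
def domOn {V : Type*} [AddCommGroup V] [Module ℝ V] (f : ℕ → V) (n : ℕ) (v : V) : Prop :=
  ∀ d : ℕ → ℝ, v = ∑ i ∈ Icc 1 n, d i • f i → ∀ i ∈ Icc 1 n, 0 ≤ d i

/-- Case I for `sl(2n,ℝ)`: with fundamental weights `ϖ_i` of the
`D_n` compact subsystem, `ξ_i = ϖ_i` for `i ≤ n-2`, `ξ_{n-1} = ϖ_{n-1} + ϖ_n`,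
`ξ_n = 2ϖ_n`, `ρ_c = Σ ϖ_i`, and `μ = Σ m_i ϖ_i` with `m_i ∈ ℤ_{≥0}`: if
`μ + 2ρ_c` is `ξ`-dominant, `μ - ξ_i` is not dominant for `1 ≤ i ≤ n-1`, and
either `μ - ξ_n` is not dominant or `μ + 2ρ_c - ξ_n` is not `ξ`-dominant,
then `μ = 0` or `μ = ϖ_n`. -/
theorem stmt11 {V : Type*} [AddCommGroup V] [Module ℝ V] (n : ℕ) (hn : 4 ≤ n)
    (ϖ : ℕ → V)
    (hind : LinearIndependent ℝ (fun i : (Icc 1 n : Finset ℕ) => ϖ i))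
    (ξ : ℕ → V)
    (hξ : ∀ i, 1 ≤ i → i ≤ n - 2 → ξ i = ϖ i)
    (hξn1 : ξ (n-1) = ϖ (n-1) + ϖ n)
    (hξn : ξ n = (2:ℝ) • ϖ n)
    (ρc : V) (hρc : ρc = ∑ i ∈ Icc 1 n, ϖ i)
    (m : ℕ → ℕ) (μ : V) (hμ : μ = ∑ i ∈ Icc 1 n, (m i : ℝ) • ϖ i)
    (ha : domOn ξ n (μ + (2:ℝ) • ρc))
    (hb : ∀ i, 1 ≤ i → i ≤ n - 1 → ¬ domOn ϖ n (μ - ξ i))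
    (hcn : ¬ domOn ϖ n (μ - ξ n) ∨ ¬ domOn ξ n (μ + (2:ℝ) • ρc - ξ n)) :
    μ = 0 ∨ μ = ϖ n := by
  have hn2 : n - 1 ∈ Icc 1 n := by simp only [mem_Icc]; omega
  have hnn : n ∈ Icc 1 n := by simp only [mem_Icc]; omega
  have hne : n - 1 ≠ n := by omega
  -- uniqueness of coefficients in the ϖ basis
  have uniq : ∀ d e : ℕ → ℝ, ∑ i ∈ Icc 1 n, d i • ϖ i = ∑ i ∈ Icc 1 n, e i • ϖ i →
      ∀ i ∈ Icc 1 n, d i = e i := by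
    intro d e h i hi
    have h0 : ∑ i : (Icc 1 n : Finset ℕ), (d i - e i) • ϖ (i : ℕ) = 0 := by
      rw [Finset.sum_coe_sort (Icc 1 n) (fun j => (d j - e j) • ϖ j)]
      simp [sub_smul, Finset.sum_sub_distrib, h]
    have h1 := Fintype.linearIndependent_iff.mp hind (fun i => d (i : ℕ) - e (i : ℕ)) h0
      ⟨i, hi⟩
    have : d i - e i = 0 := h1
    linarith
  -- splitting off the last two indices
  have hdecomp : Icc 1 n = insert (n-1) (insert n (Icc 1 (n-2))) := by
    ext x
    simp only [mem_Icc, mem_insert]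
    omega
  have hnm1 : (n-1) ∉ insert n (Icc 1 (n-2)) := by
    simp only [mem_insert, mem_Icc]; omega
  have hnm2 : n ∉ Icc 1 (n-2) := by simp only [mem_Icc]; omega
  have split : ∀ f : ℕ → V, ∑ i ∈ Icc 1 n, f i
      = f (n-1) + (f n + ∑ i ∈ Icc 1 (n-2), f i) := by
    intro f
    rw [hdecomp, Finset.sum_insert hnm1, Finset.sum_insert hnm2]
  -- converting ξ-expansions into ϖ-expansions
  have hxi_sum : ∀ d : ℕ → ℝ, ∑ i ∈ Icc 1 n, d i • ξ i
      = ∑ i ∈ Icc 1 n, (if i = n then d (n-1) + 2 * d n else d i) • ϖ i := by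
    intro d
    rw [split, split]
    have hs : ∑ i ∈ Icc 1 (n-2), d i • ξ i
        = ∑ i ∈ Icc 1 (n-2), (if i = n then d (n-1) + 2 * d n else d i) • ϖ i := by
      apply Finset.sum_congr rfl
      intro i hi
      simp only [mem_Icc] at hi
      rw [hξ i hi.1 hi.2, if_neg (by omega)]
    rw [hs, hξn1, hξn, if_neg hne, if_pos rfl, smul_add, smul_smul, add_smul]
    module
  -- dominance from non-negative canonical coefficients
  have domOn_of : ∀ cc : ℕ → ℝ, (∀ i ∈ Icc 1 n, 0 ≤ cc i) →
      domOn ϖ n (∑ i ∈ Icc 1 n, cc i • ϖ i) := by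
    intro cc hcc d hd i hi
    have := uniq d cc (hd.symm) i hi
    rw [this]
    exact hcc i hi
  have domOnXi_of : ∀ cc : ℕ → ℝ, (∀ i ∈ Icc 1 n, 0 ≤ cc i) → cc (n-1) ≤ cc n →
      domOn ξ n (∑ i ∈ Icc 1 n, cc i • ϖ i) := by
    intro cc h1 h2 d hd i hi
    have h3 : ∑ j ∈ Icc 1 n, cc j • ϖ j
        = ∑ j ∈ Icc 1 n, (if j = n then d (n-1) + 2 * d n else d j) • ϖ j := by
      rw [← hxi_sum]; exact hd
    have h4 := uniq cc _ h3
    by_cases hin : i = n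
    · have e1 := h4 (n-1) hn2
      have e2 := h4 n hnn
      rw [if_neg hne] at e1
      rw [if_pos rfl] at e2
      rw [hin]
      linarith
    · have := h4 i hi
      rw [if_neg hin] at this
      rw [← this]
      exact h1 i hi
  -- canonical representation of subtractions
  have subrep : ∀ (g : ℕ → ℝ) (i0 : ℕ), i0 ∈ Icc 1 n → ∀ a : ℝ,
      (∑ j ∈ Icc 1 n, g j • ϖ j) - a • ϖ i0
        = ∑ j ∈ Icc 1 n, (g j - if j = i0 then a else 0) • ϖ j := by
    intro g i0 h0 a
    simp only [sub_smul, Finset.sum_sub_distrib, ite_smul, zero_smul,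
      Finset.sum_ite_eq', h0, if_pos]
  have hrep2 : μ + (2:ℝ) • ρc = ∑ i ∈ Icc 1 n, ((m i : ℝ) + 2) • ϖ i := by
    rw [hμ, hρc, Finset.smul_sum, ← Finset.sum_add_distrib]
    exact Finset.sum_congr rfl fun i _ => (add_smul _ _ _).symm
  -- (1) m (n-1) ≤ m n, from ξ-dominance of μ + 2ρc
  have key1 : (m (n-1) : ℝ) ≤ (m n : ℝ) := by
    have hrep : μ + (2:ℝ) • ρc = ∑ i ∈ Icc 1 n,
        (if i = n then ((m n : ℝ) - (m (n-1) : ℝ))/2 else (m i : ℝ) + 2) • ξ i := by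
      rw [hxi_sum, hrep2]
      apply Finset.sum_congr rfl
      intro i _
      by_cases h : i = n
      · subst h
        rw [if_pos rfl, if_pos rfl, if_neg hne]
        congr 1
        ring
      · rw [if_neg h, if_neg h]
    have := ha _ hrep n hnn
    rw [if_pos rfl] at this
    linarith
  -- (2) m i = 0 for 1 ≤ i ≤ n-2
  have key2 : ∀ i, 1 ≤ i → i ≤ n - 2 → m i = 0 := by
    intro i h1 h2
    by_contra h
    apply hb i h1 (by omega)
    rw [hξ i h1 h2, hμ, ← one_smul ℝ (ϖ i), subrep _ i (by simp only [mem_Icc]; omega) 1]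
    apply domOn_of
    intro j hj
    by_cases hji : j = i
    · rw [if_pos hji, hji]
      have : 1 ≤ m i := by omega
      have : (1:ℝ) ≤ (m i : ℝ) := by exact_mod_cast this
      linarith
    · rw [if_neg hji]
      have : (0:ℝ) ≤ (m j : ℝ) := Nat.cast_nonneg _
      linarith
  -- (3) m (n-1) = 0
  have key3 : m (n-1) = 0 := by
    by_contra h
    have hmn : 1 ≤ m n := by
      have h1 : (1:ℝ) ≤ (m (n-1) : ℝ) := by exact_mod_cast Nat.one_le_iff_ne_zero.mpr h
      have : (1:ℝ) ≤ (m n : ℝ) := le_trans h1 key1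
      exact_mod_cast this
    apply hb (n-1) (by omega) le_rfl
    rw [hξn1, hμ]
    have : (∑ j ∈ Icc 1 n, (m j : ℝ) • ϖ j) - (ϖ (n-1) + ϖ n)
        = (∑ j ∈ Icc 1 n, ((m j : ℝ) - if j = n-1 then 1 else 0) • ϖ j) - (1:ℝ) • ϖ n := by
      rw [← subrep _ (n-1) hn2 1, one_smul, sub_sub, one_smul]
    rw [this, subrep _ n hnn 1]
    apply domOn_of
    intro j hj
    by_cases hj1 : j = n - 1
    · rw [if_pos hj1, hj1, if_neg hne]
      have : (1:ℝ) ≤ (m (n-1) : ℝ) := by exact_mod_cast Nat.one_le_iff_ne_zero.mpr h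
      linarith
    · rw [if_neg hj1]
      by_cases hj2 : j = n
      · rw [if_pos hj2, hj2]
        have : (1:ℝ) ≤ (m n : ℝ) := by exact_mod_cast hmn
        linarith
      · rw [if_neg hj2]
        have : (0:ℝ) ≤ (m j : ℝ) := Nat.cast_nonneg _
        linarith
  -- (4) m n ≤ 1
  have key4 : m n ≤ 1 := by
    by_contra h
    push_neg at h
    have h2 : (2:ℝ) ≤ (m n : ℝ) := by exact_mod_cast h
    rcases hcn with hc1 | hc2
    · apply hc1
      rw [hξn, hμ, subrep _ n hnn 2]
      apply domOn_of
      intro j hj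
      by_cases hjn : j = n
      · rw [if_pos hjn, hjn]
        linarith
      · rw [if_neg hjn]
        have : (0:ℝ) ≤ (m j : ℝ) := Nat.cast_nonneg _
        linarith
    · apply hc2
      rw [hξn, hrep2, subrep _ n hnn 2]
      apply domOnXi_of
      · intro j hj
        by_cases hjn : j = n
        · subst hjn
          rw [if_pos rfl]
          linarith
        · rw [if_neg hjn]
          have : (0:ℝ) ≤ (m j : ℝ) := Nat.cast_nonneg _
          linarith
      · rw [if_neg hne, if_pos rfl, key3]
        push_cast
        linarith
  -- conclusion
  have keyall : ∀ i, 1 ≤ i → i ≤ n - 1 → m i = 0 := by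
    intro i h1 h2
    by_cases hi : i ≤ n - 2
    · exact key2 i h1 hi
    · have : i = n - 1 := by omega
      rw [this]
      exact key3
  interval_cases hmn : m n
  · left
    rw [hμ]
    apply Finset.sum_eq_zero
    intro i hi
    simp only [mem_Icc] at hi
    by_cases hin : i = n
    · rw [hin, hmn]
      simp
    · rw [keyall i hi.1 (by omega)]
      simp
  · right
    rw [hμ]
    have : ∀ i ∈ Icc 1 n, (m i : ℝ) • ϖ i = (if i = n then ϖ i else 0) := by
      intro i hi
      simp only [mem_Icc] at hi
      by_cases hin : i = n
      · rw [if_pos hin, hin, hmn]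
        simp
      · rw [if_neg hin, keyall i hi.1 (by omega)]
        simp
    rw [Finset.sum_congr rfl this, Finset.sum_ite_eq' (Icc 1 n) n, if_pos hnn]
end

section
/- In the setting of so(2p, 2q+1) (type B_n root system, n = p+q > 1, with non-compact simple roots determined by a Vogan diagram and compactness by the parity rule), let γ = Σ_j c_j α_j be a simple root of the compact subsystem Δ⁺(k,t), and let ξ_i be the fundamental weights of Δ⁺(g,t). Then for each i, the integer 2(ξ_i, γ)/(γ, γ) belongs to {0, 1, 2}. -/
open Finset

/-- Simple roots of type `B_n`: `α_i = e_i - e_{i+1}` for `i < n`, `α_n = e_n`. -/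
noncomputable def αB (n i : ℕ) : ℕ → ℝ := if i < n then e i - e (i+1) else e n

/-- Positive roots of type `B_n`: `e_i ± e_j` for `1 ≤ i < j ≤ n` and `e_i`. -/
def BposRoots (n : ℕ) : Set (ℕ → ℝ) :=
  {v | (∃ i j, 1 ≤ i ∧ i < j ∧ j ≤ n ∧ (v = e i - e j ∨ v = e i + e j)) ∨
       (∃ i, 1 ≤ i ∧ i ≤ n ∧ v = e i)}

/-- Fundamental weights of type `B_n`: `ξ_i = e_1 + ⋯ + e_i` for `i < n`,
`ξ_n = (e_1 + ⋯ + e_n)/2`. -/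
noncomputable def ξB (n i : ℕ) : ℕ → ℝ :=
  if i < n then ∑ k ∈ Icc 1 i, e k else (1/2 : ℝ) • ∑ k ∈ Icc 1 n, e k

/-- Standard inner product on the first `n` coordinates. -/
def ip (n : ℕ) (v w : ℕ → ℝ) : ℝ := ∑ i ∈ Icc 1 n, v i * w i

lemma ip_e_e (n a b : ℕ) (ha : a ∈ Icc 1 n) :
    ip n (e a) (e b) = if a = b then 1 else 0 := by
  unfold ip e
  rw [Finset.sum_eq_single_of_mem a ha]
  · rw [Pi.single_eq_same, one_mul, Pi.single_apply]
  · intro i _ hi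
    rw [Pi.single_eq_of_ne hi, zero_mul]

lemma ip_sub_right (n : ℕ) (u v w : ℕ → ℝ) : ip n u (v - w) = ip n u v - ip n u w := by
  simp [ip, mul_sub, Finset.sum_sub_distrib]

lemma ip_add_right (n : ℕ) (u v w : ℕ → ℝ) : ip n u (v + w) = ip n u v + ip n u w := by
  simp [ip, mul_add, Finset.sum_add_distrib]

lemma ip_sub_left (n : ℕ) (u v w : ℕ → ℝ) : ip n (v - w) u = ip n v u - ip n w u := by
  simp [ip, sub_mul, Finset.sum_sub_distrib]

lemma ip_add_left (n : ℕ) (u v w : ℕ → ℝ) : ip n (v + w) u = ip n v u + ip n w u := by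
  simp [ip, add_mul, Finset.sum_add_distrib]

lemma ip_smul_left (n : ℕ) (c : ℝ) (v u : ℕ → ℝ) : ip n (c • v) u = c * ip n v u := by
  simp [ip, Finset.mul_sum, mul_assoc]

lemma ip_sum_left (n : ℕ) (s : Finset ℕ) (f : ℕ → ℕ → ℝ) (u : ℕ → ℝ) :
    ip n (∑ k ∈ s, f k) u = ∑ k ∈ s, ip n (f k) u := by
  simp only [ip, Finset.sum_apply, Finset.sum_mul]
  exact Finset.sum_comm

lemma ip_chunk (n i a : ℕ) (hi : i ≤ n) (ha : a ∈ Icc 1 n) :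
    ip n (∑ k ∈ Icc 1 i, e k) (e a) = if a ≤ i then 1 else 0 := by
  rw [ip_sum_left]
  rw [Finset.sum_congr rfl (fun k hk => ip_e_e n k a (Icc_subset_Icc_right hi hk)),
    Finset.sum_ite_eq' (Icc 1 i) a (fun _ => (1:ℝ))]
  simp [Finset.mem_Icc, (Finset.mem_Icc.mp ha).1]

/-- for `so(2p, 2q+1)` (type `B_n`, `n = p+q > 1`, non-compact
simple roots `α_p` and `α_n`, compactness by the parity rule), if `γ` is a simple
root of the compact subsystem (a compact positive root not expressible as a sum
of two compact positive roots), then `2(ξ_i, γ)/(γ, γ) ∈ {0, 1, 2}` for each `i`. -/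
theorem stmt13 (p q n : ℕ) (hn : n = p + q) (hn1 : 1 < n) (hp : 1 ≤ p)
    (coeffs : (ℕ → ℝ) → ℕ → ℤ)
    (hcoeffs : ∀ β ∈ BposRoots n, β = ∑ i ∈ Icc 1 n, (coeffs β i : ℝ) • αB n i)
    (compact : (ℕ → ℝ) → Prop)
    (hcompact : ∀ β, compact β ↔ Even (coeffs β p + coeffs β n))
    (γ : ℕ → ℝ) (hγ : γ ∈ BposRoots n) (hγc : compact γ)
    (hmin : ¬ ∃ a b, a ∈ BposRoots n ∧ b ∈ BposRoots n ∧
      compact a ∧ compact b ∧ γ = a + b) :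
    ∀ i ∈ Icc 1 n, 2 * ip n (ξB n i) γ / ip n γ γ ∈ ({0, 1, 2} : Set ℝ) := by
  intro i hi
  obtain ⟨hi1, hin⟩ := Finset.mem_Icc.mp hi
  simp only [Set.mem_insert_iff, Set.mem_singleton_iff]
  rcases hγ with ⟨a, b, ha1, hab, hbn, hγ' | hγ'⟩ | ⟨a, ha1, han, hγ'⟩ <;> subst hγ'
  · have ha : a ∈ Icc 1 n := Finset.mem_Icc.mpr ⟨ha1, by omega⟩
    have hb : b ∈ Icc 1 n := Finset.mem_Icc.mpr ⟨by omega, hbn⟩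
    have hne : a ≠ b := by omega
    have hgg : ip n (e a - e b) (e a - e b) = 2 := by
      rw [ip_sub_right, ip_sub_left, ip_sub_left, ip_e_e n a a ha, ip_e_e n b a hb,
        ip_e_e n a b ha, ip_e_e n b b hb]
      simp [hne, Ne.symm hne]; norm_num
    unfold ξB
    by_cases hiln : i < n
    · rw [if_pos hiln, hgg, ip_sub_right, ip_chunk n i a (le_of_lt hiln) ha,
        ip_chunk n i b (le_of_lt hiln) hb]
      split_ifs with h1 h2
      · left; norm_num
      · right; left; norm_num
      · omega
      · left; norm_num
    · rw [if_neg hiln, hgg, ip_smul_left, ip_sub_right, ip_chunk n n a le_rfl ha,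
        ip_chunk n n b le_rfl hb, if_pos (by omega), if_pos hbn]
      left; norm_num
  · have ha : a ∈ Icc 1 n := Finset.mem_Icc.mpr ⟨ha1, by omega⟩
    have hb : b ∈ Icc 1 n := Finset.mem_Icc.mpr ⟨by omega, hbn⟩
    have hne : a ≠ b := by omega
    have hgg : ip n (e a + e b) (e a + e b) = 2 := by
      rw [ip_add_right, ip_add_left, ip_add_left, ip_e_e n a a ha, ip_e_e n b a hb,
        ip_e_e n a b ha, ip_e_e n b b hb]
      simp [hne, Ne.symm hne]; norm_num
    unfold ξB
    by_cases hiln : i < n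
    · rw [if_pos hiln, hgg, ip_add_right, ip_chunk n i a (le_of_lt hiln) ha,
        ip_chunk n i b (le_of_lt hiln) hb]
      split_ifs with h1 h2
      · right; right; norm_num
      · right; left; norm_num
      · omega
      · left; norm_num
    · rw [if_neg hiln, hgg, ip_smul_left, ip_add_right, ip_chunk n n a le_rfl ha,
        ip_chunk n n b le_rfl hb, if_pos (by omega), if_pos hbn]
      right; left; norm_num
  · have ha : a ∈ Icc 1 n := Finset.mem_Icc.mpr ⟨ha1, han⟩
    have hgg : ip n (e a) (e a) = 1 := by
      rw [ip_e_e n a a ha]; simp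
    unfold ξB
    by_cases hiln : i < n
    · rw [if_pos hiln, hgg, ip_chunk n i a (le_of_lt hiln) ha]
      split_ifs with h1
      · right; right; norm_num
      · left; norm_num
    · rw [if_neg hiln, hgg, ip_smul_left, ip_chunk n n a le_rfl ha, if_pos han]
      right; left; norm_num
end

section
/- Let μ = Σ m_i ϖ_i (m_i ∈ ℤ_{≥0}) be a weight for so(2n)-type fundamental weights ϖ_1,...,ϖ_n with ξ_i = ϖ_i for i ≤ n−2, ξ_{n−1} = ϖ_{n−1} + ϖ_n, ξ_n = 2ϖ_{n−1}, and suppose μ + 2ρ_c is ξ-dominant (equivalently m_{n−1} ≥ m_n), μ − ξ_i is not ϖ-dominant for 1 ≤ i ≤ n−1, and either μ − ξ_n is not ϖ-dominant or μ + 2ρ_c − ξ_n is not ξ-dominant. Then μ = 0 or μ = ϖ_{n−1}. -/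
open Finset

/-- Case II for `sl(2n,ℝ)`: with fundamental weights `ϖ_i`,
`ξ_i = ϖ_i` for `i ≤ n-2`, `ξ_{n-1} = ϖ_{n-1} + ϖ_n`, `ξ_n = 2ϖ_{n-1}`,
`ρ_c = Σ ϖ_i`, and `μ = Σ m_i ϖ_i` with `m_i ∈ ℤ_{≥0}`: if `μ + 2ρ_c` is
`ξ`-dominant, `μ - ξ_i` is not `ϖ`-dominant for `1 ≤ i ≤ n-1`, and either
`μ - ξ_n` is not `ϖ`-dominant or `μ + 2ρ_c - ξ_n` is not `ξ`-dominant,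
then `μ = 0` or `μ = ϖ_{n-1}`. -/
theorem stmt16 {V : Type*} [AddCommGroup V] [Module ℝ V] (n : ℕ) (hn : 4 ≤ n)
    (ϖ : ℕ → V)
    (hind : LinearIndependent ℝ (fun i : (Icc 1 n : Finset ℕ) => ϖ i))
    (ξ : ℕ → V)
    (hξ : ∀ i, 1 ≤ i → i ≤ n - 2 → ξ i = ϖ i)
    (hξn1 : ξ (n-1) = ϖ (n-1) + ϖ n)
    (hξn : ξ n = (2:ℝ) • ϖ (n-1))
    (ρc : V) (hρc : ρc = ∑ i ∈ Icc 1 n, ϖ i)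
    (m : ℕ → ℕ) (μ : V) (hμ : μ = ∑ i ∈ Icc 1 n, (m i : ℝ) • ϖ i)
    (ha : domOn ξ n (μ + (2:ℝ) • ρc))
    (hb : ∀ i, 1 ≤ i → i ≤ n - 1 → ¬ domOn ϖ n (μ - ξ i))
    (hcn : ¬ domOn ϖ n (μ - ξ n) ∨ ¬ domOn ξ n (μ + (2:ℝ) • ρc - ξ n)) :
    μ = 0 ∨ μ = ϖ (n-1) := by
  have hmem1 : n - 1 ∈ Icc 1 n := by simp only [Finset.mem_Icc]; omega
  have hmemn : n ∈ Icc 1 n := by simp only [Finset.mem_Icc]; omega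
  have hne : n - 1 ≠ n := by omega
  -- uniqueness of ϖ-coefficients
  have key : ∀ a b : ℕ → ℝ, ∑ i ∈ Icc 1 n, a i • ϖ i = ∑ i ∈ Icc 1 n, b i • ϖ i →
      ∀ i ∈ Icc 1 n, a i = b i := by
    intro a b hab i hi
    have h0 : ∑ i ∈ Icc 1 n, (a i - b i) • ϖ i = 0 := by
      simp [sub_smul, Finset.sum_sub_distrib, hab]
    have h1 : ∑ i : (Icc 1 n : Finset ℕ), (a i - b i) • ϖ i = 0 := by
      rw [Finset.sum_coe_sort (Icc 1 n) (fun j => (a j - b j) • ϖ j)]; exact h0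
    have := Fintype.linearIndependent_iff.mp hind (fun j => a j - b j) h1 ⟨i, hi⟩
    simpa [sub_eq_zero] using this
  -- change of basis ξ → ϖ
  set T : (ℕ → ℝ) → (ℕ → ℝ) :=
    fun d i => if i = n-1 then d (n-1) + 2*d n else if i = n then d (n-1) else d i with hTdef
  have hT1 : ∀ d : ℕ → ℝ, T d (n-1) = d (n-1) + 2*d n := by
    intro d
    show (if n-1 = n-1 then d (n-1) + 2*d n else if n-1 = n then d (n-1) else d (n-1)) = _
    rw [if_pos rfl]
  have hT2 : ∀ d : ℕ → ℝ, T d n = d (n-1) := by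
    intro d
    show (if n = n-1 then d (n-1) + 2*d n else if n = n then d (n-1) else d n) = _
    rw [if_neg (Ne.symm hne), if_pos rfl]
  have hT3 : ∀ d : ℕ → ℝ, ∀ i, i ≠ n-1 → i ≠ n → T d i = d i := by
    intro d i h1 h2
    show (if i = n-1 then d (n-1) + 2*d n else if i = n then d (n-1) else d i) = _
    rw [if_neg h1, if_neg h2]
  have hT : ∀ d : ℕ → ℝ,
      ∑ i ∈ Icc 1 n, d i • ξ i = ∑ i ∈ Icc 1 n, T d i • ϖ i := by
    intro d
    rw [← sub_eq_zero, ← Finset.sum_sub_distrib]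
    have hsub : ({n-1, n} : Finset ℕ) ⊆ Icc 1 n := by
      intro x hx
      simp only [Finset.mem_insert, Finset.mem_singleton] at hx
      rcases hx with h | h <;> simp only [Finset.mem_Icc] <;> omega
    rw [← Finset.sum_subset hsub ?_]
    · rw [Finset.sum_pair hne, hT1, hT2, hξn1, hξn]
      module
    · intro x hx hx'
      simp only [Finset.mem_insert, Finset.mem_singleton, not_or] at hx'
      simp only [Finset.mem_Icc] at hx
      rw [hT3 d x hx'.1 hx'.2, hξ x hx.1 (by omega), sub_self]
  -- from non-dominance w.r.t. ϖ
  have notϖ : ∀ c : ℕ → ℝ, ¬ domOn ϖ n (∑ i ∈ Icc 1 n, c i • ϖ i) →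
      ∃ i ∈ Icc 1 n, c i < 0 := by
    intro c hc
    unfold domOn at hc
    push_neg at hc
    obtain ⟨d, hd, i, hi, hdi⟩ := hc
    exact ⟨i, hi, by rw [key c d hd i hi]; linarith⟩
  -- sum linearity helpers
  have hlin : ∀ a b : ℕ → ℝ, ∑ j ∈ Icc 1 n, (a j - b j) • ϖ j =
      ∑ j ∈ Icc 1 n, a j • ϖ j - ∑ j ∈ Icc 1 n, b j • ϖ j := by
    intro a b
    rw [← Finset.sum_sub_distrib]
    exact Finset.sum_congr rfl fun j _ => sub_smul _ _ _
  have hsingle : ∀ i ∈ Icc 1 n, ∀ c : ℝ,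
      ∑ j ∈ Icc 1 n, (if j = i then c else 0) • ϖ j = c • ϖ i := by
    intro i hi c
    rw [Finset.sum_eq_single_of_mem i hi (fun j _ hj => by rw [if_neg hj, zero_smul]), if_pos rfl]
  -- expansion of μ + 2ρc in ϖ basis
  have E1 : μ + (2:ℝ) • ρc = ∑ i ∈ Icc 1 n, ((m i : ℝ) + 2) • ϖ i := by
    rw [hμ, hρc, Finset.smul_sum, ← Finset.sum_add_distrib]
    exact Finset.sum_congr rfl fun i _ => (add_smul _ _ _).symm
  -- ha gives m n ≤ m (n-1)
  have hmnN : m n ≤ m (n-1) := by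
    set e : ℕ → ℝ := fun i => if i = n-1 then (m n : ℝ) + 2
      else if i = n then ((m (n-1) : ℝ) - (m n : ℝ))/2 else (m i : ℝ) + 2 with hedef
    have he1 : e (n-1) = (m n : ℝ) + 2 := if_pos rfl
    have he2 : e n = ((m (n-1) : ℝ) - (m n : ℝ))/2 := by
      show (if n = n-1 then (m n : ℝ) + 2 else if n = n then _ else _) = _
      rw [if_neg (Ne.symm hne), if_pos rfl]
    have he3 : ∀ i, i ≠ n-1 → i ≠ n → e i = (m i : ℝ) + 2 := by
      intro i h1 h2
      show (if i = n-1 then _ else if i = n then _ else ((m i : ℝ) + 2)) = _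
      rw [if_neg h1, if_neg h2]
    have hexp : μ + (2:ℝ) • ρc = ∑ i ∈ Icc 1 n, e i • ξ i := by
      rw [E1, hT e]
      refine Finset.sum_congr rfl fun i _ => ?_
      by_cases h1 : i = n-1
      · rw [h1, hT1, he1, he2]
        congr 1
        ring
      · by_cases h2 : i = n
        · rw [h2, hT2, he1]
        · rw [hT3 e i h1 h2, he3 i h1 h2]
    have := ha e hexp n hmemn
    rw [he2] at this
    have : (m n : ℝ) ≤ (m (n-1) : ℝ) := by linarith
    exact_mod_cast this
  -- m i = 0 for 1 ≤ i ≤ n-2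
  have hm0 : ∀ i, 1 ≤ i → i ≤ n - 2 → m i = 0 := by
    intro i hi1 hi2
    have him : i ∈ Icc 1 n := by simp only [Finset.mem_Icc]; omega
    have hexp : μ - ξ i =
        ∑ j ∈ Icc 1 n, ((m j : ℝ) - if j = i then 1 else 0) • ϖ j := by
      rw [hμ, hξ i hi1 hi2,
        hlin (fun j => (m j : ℝ)) (fun j => if j = i then (1:ℝ) else 0),
        hsingle i him 1, one_smul]
    obtain ⟨j, hj, hjlt⟩ := notϖ _ (hexp ▸ hb i hi1 (by omega))
    by_cases h : j = i
    · rw [if_pos h] at hjlt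
      have h1 : (m j : ℝ) < 1 := by linarith
      have h2 : m j < 1 := by exact_mod_cast h1
      rw [← h]
      omega
    · rw [if_neg h, sub_zero] at hjlt
      exact absurd hjlt (Nat.cast_nonneg _).not_gt
  -- m n = 0
  have hmn0 : m n = 0 := by
    have hexp : μ - ξ (n-1) = ∑ j ∈ Icc 1 n,
        ((m j : ℝ) - ((if j = n-1 then (1:ℝ) else 0) + (if j = n then (1:ℝ) else 0))) • ϖ j := by
      rw [hμ, hξn1,
        hlin (fun j => (m j : ℝ))
          (fun j => (if j = n-1 then (1:ℝ) else 0) + (if j = n then (1:ℝ) else 0))]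
      congr 1
      rw [Finset.sum_congr rfl fun j _ => add_smul _ _ (ϖ j), Finset.sum_add_distrib,
        hsingle (n-1) hmem1 1, hsingle n hmemn 1, one_smul, one_smul]
    obtain ⟨j, hj, hjlt⟩ := notϖ _ (hexp ▸ hb (n-1) (by omega) le_rfl)
    by_cases h1 : j = n-1
    · rw [if_pos h1, h1] at hjlt
      rw [if_neg hne, ← h1] at hjlt
      have ha1 : (m j : ℝ) < 1 := by linarith
      have ha2 : m j < 1 := by exact_mod_cast ha1
      rw [h1] at ha2
      omega
    · by_cases h2 : j = n
      · rw [if_neg h1, if_pos h2] at hjlt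
        have ha1 : (m j : ℝ) < 1 := by linarith
        have ha2 : m j < 1 := by exact_mod_cast ha1
        rw [h2] at ha2
        omega
      · rw [if_neg h1, if_neg h2, add_zero, sub_zero] at hjlt
        exact absurd hjlt (Nat.cast_nonneg _).not_gt
  -- m (n-1) ≤ 1
  have hm1 : m (n-1) ≤ 1 := by
    rcases hcn with hc | hc
    · have hexp : μ - ξ n =
          ∑ j ∈ Icc 1 n, ((m j : ℝ) - if j = n-1 then 2 else 0) • ϖ j := by
        rw [hμ, hξn, hlin (fun j => (m j : ℝ)) (fun j => if j = n-1 then (2:ℝ) else 0),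
          hsingle (n-1) hmem1 2]
      obtain ⟨j, hj, hjlt⟩ := notϖ _ (hexp ▸ hc)
      by_cases h : j = n-1
      · rw [if_pos h] at hjlt
        have ha1 : (m j : ℝ) < 2 := by linarith
        have ha2 : m j < 2 := by exact_mod_cast ha1
        rw [h] at ha2
        omega
      · rw [if_neg h, sub_zero] at hjlt
        exact absurd hjlt (Nat.cast_nonneg _).not_gt
    · unfold domOn at hc
      push_neg at hc
      obtain ⟨d, hd, i, hi, hdi⟩ := hc
      set c : ℕ → ℝ := fun j => (m j : ℝ) + 2 - (if j = n-1 then 2 else 0) with hcdef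
      have hc1 : c (n-1) = (m (n-1) : ℝ) := by
        show ((m (n-1) : ℝ) + 2 - if n-1 = n-1 then 2 else 0) = _
        rw [if_pos rfl]; ring
      have hc2 : c n = (m n : ℝ) + 2 := by
        show ((m n : ℝ) + 2 - if n = n-1 then 2 else 0) = _
        rw [if_neg (Ne.symm hne), sub_zero]
      have hc3 : ∀ j, j ≠ n-1 → c j = (m j : ℝ) + 2 := by
        intro j hj
        show ((m j : ℝ) + 2 - if j = n-1 then 2 else 0) = _
        rw [if_neg hj, sub_zero]
      have hcv : μ + (2:ℝ) • ρc - ξ n = ∑ j ∈ Icc 1 n, c j • ϖ j := by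
        rw [E1, hξn, hcdef,
          hlin (fun j => (m j : ℝ) + 2) (fun j => if j = n-1 then (2:ℝ) else 0),
          hsingle (n-1) hmem1 2]
      have hkey : ∀ j ∈ Icc 1 n, T d j = c j := by
        apply key
        rw [← hT d, ← hd, hcv]
      by_cases h1 : i = n-1
      · exfalso
        have e1 := hkey n hmemn
        rw [hT2, hc2] at e1
        rw [h1] at hdi
        have : (0:ℝ) ≤ (m n : ℝ) + 2 := by positivity
        linarith [e1 ▸ hdi]
      · by_cases h2 : i = n
        · have e1 := hkey n hmemn
          rw [hT2, hc2] at e1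
          have e2 := hkey (n-1) hmem1
          rw [hT1, hc1] at e2
          rw [h2] at hdi
          have hlt : (m (n-1) : ℝ) < (m n : ℝ) + 2 := by linarith
          rw [hmn0] at hlt
          have hlt2 : (m (n-1) : ℝ) < 2 := by push_cast at hlt ⊢; linarith
          have hlt3 : m (n-1) < 2 := by exact_mod_cast hlt2
          omega
        · exfalso
          have := hkey i hi
          rw [hT3 d i h1 h2, hc3 i h1] at this
          have : (0:ℝ) ≤ d i := by rw [this]; positivity
          linarith
  -- conclusion
  have hall : ∀ i ∈ Icc 1 n, i ≠ n-1 → m i = 0 := by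
    intro i hi hi'
    simp only [Finset.mem_Icc] at hi
    by_cases h : i = n
    · exact h ▸ hmn0
    · exact hm0 i hi.1 (by omega)
  rcases Nat.le_one_iff_eq_zero_or_eq_one.mp hm1 with h | h
  · left
    rw [hμ]
    apply Finset.sum_eq_zero
    intro i hi
    by_cases hh : i = n-1
    · rw [hh, h]; simp
    · rw [hall i hi hh]; simp
  · right
    rw [hμ, Finset.sum_eq_single_of_mem (n-1) hmem1
      (fun j hj hjne => by rw [hall j hj hjne]; simp)]
    rw [h]; simp
end

section
/- In the type B_n root system with compactness given by the parity rule where α_p and α_n are the non-compact simple roots (Vogan diagram of so(2p, 2q+1)), any simple root γ of the compact subsystem is of one of the forms: (1) a simple root α_i of Δ⁺(g,t); (2) α_l + ⋯ + α_m with α_l, α_m non-compact and all intermediate summands compact; (3) α_l + ⋯ + α_{m−1} + 2(α_m + ⋯ + α_n) with α_l, α_{m−1}, α_m non-compact and the rest compact; (4) α_{m−1} + 2(α_m + ⋯ + α_n) with α_m non-compact and the rest compact. -/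
open Finset

/-- A simple-root index `k` is non-compact iff `k = p` or `k = n`
(the Vogan diagram of `so(2p, 2q+1)`). -/
def noncompactIdx (p n k : ℕ) : Prop := k = p ∨ k = n

lemma sum_e (a k : ℕ) : ∑ t ∈ Icc 1 k, e a t = if a ∈ Icc 1 k then 1 else 0 := by
  simp [e, Pi.single_apply, Finset.sum_ite_eq']

lemma sum_αB (n i k : ℕ) (hi1 : 1 ≤ i) (hin : i ≤ n) (hk : k ≤ n) :
    ∑ t ∈ Icc 1 k, αB n i t = if i = k then 1 else 0 := by
  rcases lt_or_ge i n with h | h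
  · simp only [αB, if_pos h, Pi.sub_apply, Finset.sum_sub_distrib, sum_e, mem_Icc]
    split_ifs <;> norm_num <;> omega
  · have hin' : i = n := le_antisymm hin h
    subst hin'
    simp only [show αB i i = e i from by simp [αB], sum_e, mem_Icc]
    split_ifs <;> norm_num <;> omega

lemma coeff_eq (n : ℕ) (β : ℕ → ℝ) (c : ℕ → ℤ)
    (h : β = ∑ i ∈ Icc 1 n, (c i : ℝ) • αB n i) (k : ℕ) (h1 : 1 ≤ k) (h2 : k ≤ n) :
    (c k : ℝ) = ∑ t ∈ Icc 1 k, β t := by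
  rw [h]
  simp only [Finset.sum_apply, Pi.smul_apply, smul_eq_mul]
  rw [Finset.sum_comm]
  have hcong : ∀ i ∈ Icc 1 n, ∑ t ∈ Icc 1 k, (c i:ℝ) * αB n i t
      = if i = k then (c i : ℝ) else 0 := by
    intro i hi
    rw [← Finset.mul_sum, sum_αB n i k (mem_Icc.1 hi).1 (mem_Icc.1 hi).2 h2]
    split_ifs <;> ring
  rw [Finset.sum_congr rfl hcong, Finset.sum_ite_eq' (Icc 1 n) k,
    if_pos (mem_Icc.2 ⟨h1, h2⟩)]

lemma tele (n : ℕ) : ∀ d m, m + d = n → ∑ k ∈ Icc m n, αB n k = e m := by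
  intro d
  induction d with
  | zero => intro m hm; subst hm; simp [αB]
  | succ d ih =>
    intro m hm
    have hmn : m < n := by omega
    rw [Finset.Icc_eq_cons_Ioc (le_of_lt hmn), Finset.sum_cons, ← Finset.Icc_add_one_left_eq_Ioc,
      ih (m+1) (by omega), αB, if_pos hmn]
    abel

/-- in type `B_n` (`n = p+q > 1`) with non-compact simple roots
`α_p, α_n` and compactness by the parity rule, every simple root `γ` of the
compact subsystem (compact positive root not a sum of two compact positive
roots) has one of the four listed forms. -/
theorem stmt17 (p q n : ℕ) (hn : n = p + q) (hn1 : 1 < n) (hp : 1 ≤ p)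
    (coeffs : (ℕ → ℝ) → ℕ → ℤ)
    (hcoeffs : ∀ β ∈ BposRoots n, β = ∑ i ∈ Icc 1 n, (coeffs β i : ℝ) • αB n i)
    (compact : (ℕ → ℝ) → Prop)
    (hcompact : ∀ β, compact β ↔ Even (coeffs β p + coeffs β n))
    (γ : ℕ → ℝ) (hγ : γ ∈ BposRoots n) (hγc : compact γ)
    (hmin : ¬ ∃ a b, a ∈ BposRoots n ∧ b ∈ BposRoots n ∧
      compact a ∧ compact b ∧ γ = a + b) :
    -- (1) γ is a simple root of Δ⁺(g,t)
    (∃ i, 1 ≤ i ∧ i ≤ n ∧ γ = αB n i) ∨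
    -- (2) γ = α_l + ⋯ + α_m with α_l, α_m non-compact, the rest compact
    (∃ l m, 1 ≤ l ∧ l < m ∧ m ≤ n ∧ γ = ∑ k ∈ Icc l m, αB n k ∧
      noncompactIdx p n l ∧ noncompactIdx p n m ∧
      ∀ k, l < k → k < m → ¬ noncompactIdx p n k) ∨
    -- (3) γ = α_l + ⋯ + α_{m-1} + 2(α_m + ⋯ + α_n) with α_l, α_{m-1}, α_m
    --     non-compact, the rest compact
    (∃ l m, 1 ≤ l ∧ l + 1 < m ∧ m ≤ n ∧
      γ = ∑ k ∈ Icc l (m-1), αB n k + 2 • ∑ k ∈ Icc m n, αB n k ∧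
      noncompactIdx p n l ∧ noncompactIdx p n (m-1) ∧ noncompactIdx p n m ∧
      ∀ k, ((l < k ∧ k < m - 1) ∨ (m < k ∧ k ≤ n)) → ¬ noncompactIdx p n k) ∨
    -- (4) γ = α_{m-1} + 2(α_m + ⋯ + α_n) with α_m non-compact, the rest compact
    (∃ m, 2 ≤ m ∧ m ≤ n ∧
      γ = αB n (m-1) + 2 • ∑ k ∈ Icc m n, αB n k ∧
      noncompactIdx p n m ∧ ¬ noncompactIdx p n (m-1) ∧
      ∀ k, m < k → k ≤ n → ¬ noncompactIdx p n k) := by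
  have hpn : p ≤ n := by omega
  have key : ∀ β ∈ BposRoots n, ∀ k, 1 ≤ k → k ≤ n →
      (coeffs β k : ℝ) = ∑ t ∈ Icc 1 k, β t :=
    fun β hβ k h1 h2 => coeff_eq n β (coeffs β) (hcoeffs β hβ) k h1 h2
  have mem_e : ∀ a, 1 ≤ a → a ≤ n → e a ∈ BposRoots n :=
    fun a h1 h2 => Or.inr ⟨a, h1, h2, rfl⟩
  have mem_sub : ∀ a b, 1 ≤ a → a < b → b ≤ n → e a - e b ∈ BposRoots n :=
    fun a b h1 h2 h3 => Or.inl ⟨a, b, h1, h2, h3, Or.inl rfl⟩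
  have mem_add : ∀ a b, 1 ≤ a → a < b → b ≤ n → e a + e b ∈ BposRoots n :=
    fun a b h1 h2 h3 => Or.inl ⟨a, b, h1, h2, h3, Or.inr rfl⟩
  -- compactness criteria
  have cpt_e : ∀ a, 1 ≤ a → a ≤ n → (compact (e a) ↔ a ≤ p) := by
    intro a h1 h2
    have hm := mem_e a h1 h2
    have hcp : (coeffs (e a) p : ℝ) = if a ≤ p then 1 else 0 := by
      rw [key _ hm p hp hpn, sum_e]; simp [mem_Icc, h1]
    have hcn : (coeffs (e a) n : ℝ) = 1 := by
      rw [key _ hm n (by omega) le_rfl, sum_e, if_pos (mem_Icc.2 ⟨h1, h2⟩)]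
    have hcp' : coeffs (e a) p = if a ≤ p then 1 else 0 := by
      split_ifs at hcp ⊢ <;> exact_mod_cast hcp
    have hcn' : coeffs (e a) n = 1 := by exact_mod_cast hcn
    rw [hcompact, hcp', hcn', Int.even_iff]
    split_ifs <;> omega
  have cpt_sub : ∀ a b, 1 ≤ a → a < b → b ≤ n →
      (compact (e a - e b) ↔ (b ≤ p ∨ p < a)) := by
    intro a b h1 h2 h3
    have hm := mem_sub a b h1 h2 h3
    have hval : ∀ k, 1 ≤ k → k ≤ n → (coeffs (e a - e b) k : ℝ) =
        (if a ≤ k then 1 else 0) - (if b ≤ k then 1 else 0) := by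
      intro k hk1 hk2
      rw [key _ hm k hk1 hk2]
      simp only [Pi.sub_apply, Finset.sum_sub_distrib, sum_e, mem_Icc]
      have : 1 ≤ b := by omega
      simp [h1, this]
    have hcp : coeffs (e a - e b) p =
        (if a ≤ p then 1 else 0) - (if b ≤ p then 1 else 0) := by
      have := hval p hp hpn; split_ifs at this ⊢ <;> exact_mod_cast this
    have hcn : coeffs (e a - e b) n = 0 := by
      have := hval n (by omega) le_rfl
      rw [if_pos (by omega), if_pos h3] at this
      exact_mod_cast (by rw [this]; norm_num : (coeffs (e a - e b) n : ℝ) = 0)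
    rw [hcompact, hcp, hcn, Int.even_iff]
    split_ifs <;> omega
  have cpt_add : ∀ a b, 1 ≤ a → a < b → b ≤ n →
      (compact (e a + e b) ↔ (b ≤ p ∨ p < a)) := by
    intro a b h1 h2 h3
    have hm := mem_add a b h1 h2 h3
    have hval : ∀ k, 1 ≤ k → k ≤ n → (coeffs (e a + e b) k : ℝ) =
        (if a ≤ k then 1 else 0) + (if b ≤ k then 1 else 0) := by
      intro k hk1 hk2
      rw [key _ hm k hk1 hk2]
      simp only [Pi.add_apply, Finset.sum_add_distrib, sum_e, mem_Icc]
      have : 1 ≤ b := by omega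
      simp [h1, this]
    have hcp : coeffs (e a + e b) p =
        (if a ≤ p then 1 else 0) + (if b ≤ p then 1 else 0) := by
      have := hval p hp hpn; split_ifs at this ⊢ <;> exact_mod_cast this
    have hcn : coeffs (e a + e b) n = 2 := by
      have := hval n (by omega) le_rfl
      rw [if_pos (by omega), if_pos h3] at this
      exact_mod_cast (by rw [this]; norm_num : (coeffs (e a + e b) n : ℝ) = 2)
    rw [hcompact, hcp, hcn, Int.even_iff]
    split_ifs <;> omega
  -- main case analysis
  rcases hγ with ⟨i, j, h1, h2, h3, hform | hform⟩ | ⟨i, h1, h2, hform⟩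
  · -- γ = e i - e j
    subst hform
    have hc : j ≤ p ∨ p < i := (cpt_sub i j h1 h2 h3).mp hγc
    have hji : j = i + 1 := by
      by_contra hne
      have hlt : i + 1 < j := by omega
      exact hmin ⟨e i - e (i+1), e (i+1) - e j,
        mem_sub i (i+1) h1 (by omega) (by omega),
        mem_sub (i+1) j (by omega) hlt h3,
        (cpt_sub i (i+1) h1 (by omega) (by omega)).mpr (by omega),
        (cpt_sub (i+1) j (by omega) hlt h3).mpr (by omega),
        by abel⟩
    subst hji
    exact Or.inl ⟨i, h1, by omega, by rw [αB, if_pos (by omega)]⟩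
  · -- γ = e i + e j
    subst hform
    have hc : j ≤ p ∨ p < i := (cpt_add i j h1 h2 h3).mp hγc
    rcases hc with hc | hc
    · exact absurd ⟨e i, e j, mem_e i h1 (by omega), mem_e j (by omega) h3,
        (cpt_e i h1 (by omega)).mpr (by omega),
        (cpt_e j (by omega) h3).mpr hc, rfl⟩ hmin
    · have hjn : j = n := by
        by_contra hne
        have hjlt : j < n := by omega
        exact hmin ⟨e i - e n, e j + e n,
          mem_sub i n h1 (by omega) le_rfl,
          mem_add j n (by omega) hjlt le_rfl,
          (cpt_sub i n h1 (by omega) le_rfl).mpr (Or.inr hc),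
          (cpt_add j n (by omega) hjlt le_rfl).mpr (Or.inr (by omega)),
          by abel⟩
      have hin : i + 1 = n := by
        by_contra hne
        have hlt : i + 1 < n := by omega
        exact hmin ⟨e i - e (i+1), e (i+1) + e j,
          mem_sub i (i+1) h1 (by omega) (by omega),
          mem_add (i+1) j (by omega) (by omega) h3,
          (cpt_sub i (i+1) h1 (by omega) (by omega)).mpr (Or.inr hc),
          (cpt_add (i+1) j (by omega) (by omega) h3).mpr (Or.inr (by omega)),
          by abel⟩
      refine Or.inr (Or.inr (Or.inr ⟨n, by omega, le_rfl, ?_, Or.inr rfl, ?_, ?_⟩))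
      · rw [Finset.Icc_self, Finset.sum_singleton,
          show αB n n = e n from by simp [αB],
          show αB n (n-1) = e (n-1) - e n from by rw [αB, if_pos (by omega), show n-1+1 = n from by omega],
          show j = n from hjn, show i = n - 1 from by omega, two_nsmul]
        abel
      · simp only [noncompactIdx]; omega
      · intro k hk1 hk2; simp only [noncompactIdx]; omega
  · -- γ = e i
    subst hform
    have hc : i ≤ p := (cpt_e i h1 h2).mp hγc
    have hip : i = p := by
      by_contra hne
      have hlt : i < p := by omega
      exact hmin ⟨e i - e p, e p,
        mem_sub i p h1 hlt hpn, mem_e p hp hpn,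
        (cpt_sub i p h1 hlt hpn).mpr (Or.inl le_rfl),
        (cpt_e p hp hpn).mpr le_rfl,
        by abel⟩
    by_cases hin' : i = n
    · refine Or.inl ⟨n, by omega, le_rfl, ?_⟩
      rw [show αB n n = e n from by simp [αB], hin']
    · refine Or.inr (Or.inl ⟨i, n, h1, by omega, le_rfl,
        (tele n (n - i) i (by omega)).symm, Or.inl hip, Or.inr rfl, ?_⟩)
      intro k hk1 hk2; simp only [noncompactIdx]; omega
end
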